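/- Let g = 2r with r ≥ 2, and let G_1 = π_g / N(ℬ^g_1). Then for every 1 ≤ k ≤ r the image of the word b_k a_{g+1−k} b_{g+1−k} a_{g+1−k}^{-1} in G_1 is trivial (i.e., b_k = a_{g+1−k} b_{g+1−k}^{-1} a_{g+1−k}^{-1} holds in G_1). -/

import Mathlib

namespace Paper

/-- The free group `F_g` on the `2g` generators `a_1, b_1, …, a_g, b_g`
(the pair `(i, false)` is `a_{i+1}`, the pair `(i, true)` is `b_{i+1}`). -/
abbrev F (g : ℕ) := FreeGroup (Fin g × Bool)

/-- The generator `a_i` of `F_g`, for `1 ≤ i ≤ g`; by convention `a_i = 1` for out-of-range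
indices (in particular `a_{g+1} = 1`). -/
def a (g i : ℕ) : F g :=
  if h : 1 ≤ i ∧ i ≤ g then FreeGroup.of (⟨i - 1, by omega⟩, false) else 1

/-- The generator `b_i` of `F_g`, for `1 ≤ i ≤ g`. -/
def b (g i : ℕ) : F g :=
  if h : 1 ≤ i ∧ i ≤ g then FreeGroup.of (⟨i - 1, by omega⟩, true) else 1

/-- The word `c_i = b_i⁻¹ ⋯ b_2⁻¹ b_1⁻¹ (a_1 b_1 a_1⁻¹)(a_2 b_2 a_2⁻¹) ⋯ (a_i b_i a_i⁻¹)`,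
with `c_0 = 1`. -/
def c (g i : ℕ) : F g :=
  (((List.range i).reverse.map fun j => (b g (j + 1))⁻¹).prod) *
    (((List.range i).map fun j => a g (j + 1) * b g (j + 1) * (a g (j + 1))⁻¹).prod)

/-- The product `b_i b_{i+1} ⋯ b_j`. -/
def prodb (g i j : ℕ) : F g := ((List.range (j + 1 - i)).map fun l => b g (i + l)).prod

/-- `B^h_{0,1} = b_1 b_2 ⋯ b_h`. -/
def B01 (g h : ℕ) : F g := prodb g 1 h

/-- `B^h_{0,2} = b_1 b_2 ⋯ b_h · c_h a_{h+1}`. -/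
def B02 (g h : ℕ) : F g := prodb g 1 h * c g h * a g (h + 1)

/-- `B^h_{0,s}` for `s = 1, 2`. -/
def B0 (g s h : ℕ) : F g := if s = 1 then B01 g h else B02 g h

/-- `B^h_{2k-1} = a_k · b_k b_{k+1} ⋯ b_{h+1-k} · c_{h+1-k} a_{h+1-k}`. -/
def Bodd (g h k : ℕ) : F g :=
  a g k * prodb g k (h + 1 - k) * c g (h + 1 - k) * a g (h + 1 - k)

/-- `B^h_{2k} = a_k · b_{k+1} b_{k+2} ⋯ b_{h-k} · c_{h-k} a_{h+1-k}`. -/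
def Beven (g h k : ℕ) : F g :=
  a g k * prodb g (k + 1) (h - k) * c g (h - k) * a g (h + 1 - k)

/-- The set of words `ℬ^h_s`: it consists of `B^h_{0,s}, B^h_1, …, B^h_h` (the odd-indexed
`B^h_{2k-1}` for `2k - 1 ≤ h` and the even-indexed `B^h_{2k}` for `2k ≤ h`), together with
`a_{r+1}` and `c_r a_{r+1}` when `h = 2r + 1` is odd. -/
def Bset (g s h : ℕ) : Set (F g) :=
  {B0 g s h}
    ∪ {w | ∃ k, 1 ≤ k ∧ 2 * k - 1 ≤ h ∧ w = Bodd g h k}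
    ∪ {w | ∃ k, 1 ≤ k ∧ 2 * k ≤ h ∧ w = Beven g h k}
    ∪ (if h % 2 = 1 then {a g (h / 2 + 1), c g (h / 2) * a g (h / 2 + 1)} else (∅ : Set (F g)))

/-- The genus-`g` surface group `π_g`, presented with generators `a_1, b_1, …, a_g, b_g`
and the single relator `c_g`. -/
abbrev pi (g : ℕ) := PresentedGroup ({c g g} : Set (F g))

/-- The natural projection `F_g → π_g`. -/
abbrev toPi (g : ℕ) : F g →* pi g := PresentedGroup.mk _

/-- The quotient of `π_g` by the normal closure of the images of a set `S` of words. -/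
abbrev quotBy (g : ℕ) (S : Set (F g)) :=
  pi g ⧸ Subgroup.normalClosure (toPi g '' S)

/-- The projection `π_g → π_g / N(S)`. -/
abbrev projBy (g : ℕ) (S : Set (F g)) : pi g →* quotBy g S :=
  QuotientGroup.mk' _

/-!
The relators `B_{2k-1}` and `B_{2k}` share their middle segment: since
`c_{m+1} = b_{m+1}⁻¹ c_m (a_{m+1} b_{m+1} a_{m+1}⁻¹)`, in the free group
`B_{2k-1} = (a_k b_k a_k⁻¹) B_{2k} b_{g+1-k}`, so `b_{g+1-k} = a_k b_k⁻¹ a_k⁻¹` in the quotient.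
Likewise `B_{2k+1}` is `B_{2k}` with its outer letters `a_k, a_{g+1-k}` replaced by
`a_{k+1}, a_{g-k}`, so starting from `B_1 = a_1 (b_1 ⋯ b_g) c_g a_g`, where `b_1 ⋯ b_g = 1`
by `B_{0,s}` for either `s`, an induction gives `a_{g+1-k} = a_k⁻¹`.
Substituting both identities kills `b_k a_{g+1-k} b_{g+1-k} a_{g+1-k}⁻¹`.
-/

section Words

variable (g : ℕ)

lemma c_succ (i : ℕ) :
    c g (i + 1) = (b g (i + 1))⁻¹ * c g i * (a g (i + 1) * b g (i + 1) * (a g (i + 1))⁻¹) := by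
  simp [c, List.range_succ, mul_assoc]

lemma prodb_succ_right {i j : ℕ} (h : i ≤ j + 1) :
    prodb g i (j + 1) = prodb g i j * b g (j + 1) := by
  rw [prodb, show j + 1 + 1 - i = (j + 1 - i) + 1 by omega, List.range_succ]
  simp [prodb, show i + (j + 1 - i) = j + 1 by omega]

lemma prodb_eq_b_mul {i j : ℕ} (h : i ≤ j) : prodb g i j = b g i * prodb g (i + 1) j := by
  rw [prodb, prodb, show j + 1 - i = j + 1 - (i + 1) + 1 by omega, List.range_succ_eq_map]
  simp [Function.comp_def, add_assoc, add_comm 1]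

lemma Bodd_eq_conj_mul_Beven_mul {h k : ℕ} (hk : k ≤ h - k) :
    Bodd g h k = a g k * b g k * (a g k)⁻¹ * Beven g h k * b g (h + 1 - k) := by
  rw [Bodd, Beven, show h + 1 - k = h - k + 1 by omega, prodb_succ_right g (by omega),
    prodb_eq_b_mul g hk, c_succ]
  group

lemma Bodd_succ_eq (h n : ℕ) :
    Bodd g h (n + 1) =
      a g (n + 1) * (a g n)⁻¹ * Beven g h n * (a g (h + 1 - n))⁻¹ * a g (h - n) := by
  rw [Bodd, Beven, show h + 1 - (n + 1) = h - n by omega]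
  group

variable {g}

lemma B0_mem_Bset (s h : ℕ) : B0 g s h ∈ Bset g s h :=
  Or.inl (Or.inl (Or.inl rfl))

lemma Bodd_mem_Bset {s h k : ℕ} (hk : 1 ≤ k) (hkh : 2 * k - 1 ≤ h) : Bodd g h k ∈ Bset g s h :=
  Or.inl (Or.inl (Or.inr ⟨k, hk, hkh, rfl⟩))

lemma Beven_mem_Bset {s h k : ℕ} (hk : 1 ≤ k) (hkh : 2 * k ≤ h) : Beven g h k ∈ Bset g s h :=
  Or.inl (Or.inr ⟨k, hk, hkh, rfl⟩)

end Words

section Quotient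

variable {g : ℕ}

abbrev toQuot (g : ℕ) (S : Set (F g)) : F g →* quotBy g S := (projBy g S).comp (toPi g)

lemma toQuot_eq_one_of_mem {S : Set (F g)} {w : F g} (hw : w ∈ S) : toQuot g S w = 1 :=
  (QuotientGroup.eq_one_iff _).mpr (Subgroup.subset_normalClosure ⟨w, hw, rfl⟩)

@[simp]
lemma toQuot_c (S : Set (F g)) : toQuot g S (c g g) = 1 := by
  simp [PresentedGroup.one_of_mem (Set.mem_singleton (c g g))]

lemma toQuot_prodb_one (s : ℕ) : toQuot g (Bset g s g) (prodb g 1 g) = 1 := by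
  have h : toQuot g (Bset g s g) (B0 g s g) = 1 := toQuot_eq_one_of_mem (B0_mem_Bset s g)
  have ha : a g (g + 1) = 1 := by simp [a]
  unfold B0 at h
  split_ifs at h
  · exact h
  · rwa [B02, ha, mul_one, map_mul, toQuot_c, mul_one] at h

lemma toQuot_b_eq {s k : ℕ} (hk : 1 ≤ k) (hkg : 2 * k ≤ g) :
    toQuot g (Bset g s g) (b g (g + 1 - k)) =
      toQuot g (Bset g s g) (a g k * (b g k)⁻¹ * (a g k)⁻¹) := by
  have hodd : toQuot g (Bset g s g) (Bodd g g k) = 1 :=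
    toQuot_eq_one_of_mem (Bodd_mem_Bset hk (by omega))
  rw [Bodd_eq_conj_mul_Beven_mul g (by omega), map_mul, map_mul,
    toQuot_eq_one_of_mem (Beven_mem_Bset hk hkg), mul_one] at hodd
  rw [eq_inv_of_mul_eq_one_right hodd]
  simp only [map_mul, map_inv]
  group

lemma toQuot_a_mul_a {s k : ℕ} (hk : 1 ≤ k) (hkg : 2 * k ≤ g + 1) :
    toQuot g (Bset g s g) (a g (g + 1 - k)) * toQuot g (Bset g s g) (a g k) = 1 := by
  induction k, hk using Nat.le_induction with
  | base =>
    have h1 : toQuot g (Bset g s g) (Bodd g g 1) = 1 :=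
      toQuot_eq_one_of_mem (Bodd_mem_Bset le_rfl (by omega))
    simp only [Bodd, Nat.add_sub_cancel, map_mul, toQuot_prodb_one, toQuot_c, mul_one] at h1
    exact mul_eq_one_comm.mp h1
  | succ n hn ih =>
    have hodd : toQuot g (Bset g s g) (Bodd g g (n + 1)) = 1 :=
      toQuot_eq_one_of_mem (Bodd_mem_Bset (by omega) (by omega))
    rw [Bodd_succ_eq, map_mul, map_mul, map_mul, map_mul,
      toQuot_eq_one_of_mem (Beven_mem_Bset hn (by omega)), mul_one, map_inv, map_inv,
      mul_assoc (toQuot g _ (a g (n + 1))), ← mul_inv_rev, ih (by omega), inv_one, mul_one] at hodd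
    rw [show g + 1 - (n + 1) = g - n by omega]
    exact mul_eq_one_comm.mp hodd

theorem toQuot_b_mul_conj_b {s k : ℕ} (hk : 1 ≤ k) (hkg : 2 * k ≤ g) :
    toQuot g (Bset g s g)
      (b g k * a g (g + 1 - k) * b g (g + 1 - k) * (a g (g + 1 - k))⁻¹) = 1 := by
  have ha := eq_inv_of_mul_eq_one_left (toQuot_a_mul_a (g := g) (s := s) hk (by omega))
  simp only [map_mul, map_inv, ha, toQuot_b_eq (s := s) hk hkg]
  group

end Quotient

theorem G1_bk_relation_general (r g : ℕ) (hg : g = 2 * r) :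
    ∀ k, 1 ≤ k → k ≤ r →
      projBy g (Bset g 1 g)
        (toPi g (b g k * a g (g + 1 - k) * b g (g + 1 - k) * (a g (g + 1 - k))⁻¹)) = 1 :=
  fun _ hk hkr => toQuot_b_mul_conj_b hk (by omega)

/-- For `g = 2r` with `r ≥ 2`, in `G_1 = π_g / N(ℬ^g_1)` the image of the
word `b_k a_{g+1-k} b_{g+1-k} a_{g+1-k}⁻¹` is trivial for every `1 ≤ k ≤ r`
(i.e. `b_k = a_{g+1-k} b_{g+1-k}⁻¹ a_{g+1-k}⁻¹` holds in `G_1`). -/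
theorem G1_bk_relation (r g : ℕ) (hr : 2 ≤ r) (hg : g = 2 * r) :
    ∀ k, 1 ≤ k → k ≤ r →
      projBy g (Bset g 1 g)
        (toPi g (b g k * a g (g + 1 - k) * b g (g + 1 - k) * (a g (g + 1 - k))⁻¹)) = 1 :=
  G1_bk_relation_general r g hg
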